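/- Let φ : M_n(F) → M_n(F) be a nonzero map satisfying φ(X ∘ Y) = φ(X) ∘ φ(Y) for all X, Y ∈ M_n(F) and φ(0) = 0. Then the restriction of φ to idempotents is orthoadditive: for all idempotents P, Q ∈ M_n(F) with PQ = QP = 0, one has φ(P + Q) = φ(P) + φ(Q). -/

import Mathlib

/-! Let `e`, `f`, `g` be the images of `p`, `q`, `p + q`. Jordan multiplicativity makes them
idempotents with `e ⊥ f` and `g` a unit for `e` and `f`, so the defect `s = g - e - f` is an
idempotent orthogonal to `e` and `f`, and the claim is `s = 0`. The image of any element of the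
Peirce space mixing `p` and `q` is annihilated by `s` on both sides, hence so is the image of a
Jordan product `X = u ∘ v` of two such elements; if moreover `X ∘ Y = p + q`, then
`s = s g s = s (φ X ∘ φ Y) s = 0`.

For matrices such `u`, `v`, `X`, `Y` exist when the ranks `r ≥ t` of `p` and `q` satisfy
`r ≤ 2 t`. Splitting the matrix units `E₁₁, …, Eₙₙ` into two halves of almost equal size and
inducting on `n` shows `φ 1 = ∑ φ Eᵢᵢ`; applied to a common frame of `p` and `q` this gives
`φ (p + q) = φ p + φ q`. -/

section Jordan

variable {F A R : Type*} [Field F] [Ring A] [Algebra F A] [Ring R] [Algebra F R]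

variable (F) in
def IsJordanMultiplicative (φ : A → R) : Prop :=
  ∀ x y : A, φ ((2 : F)⁻¹ • (x * y + y * x)) = (2 : F)⁻¹ • (φ x * φ y + φ y * φ x)

theorem IsIdempotentElem.mul_eq_and_mul_eq_of_add_eq_two_smul (h2 : (2 : F) ≠ 0) {m a : R}
    (hm : IsIdempotentElem m) (h : m * a + a * m = (2 : F) • a) : m * a = a ∧ a * m = a := by
  have hl : m * a * m = m * a := by
    have := congrArg (m * ·) h
    simp only [mul_add, ← mul_assoc, hm.eq, two_smul] at this
    exact add_left_cancel this
  have hr : m * a * m = a * m := by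
    have := congrArg (· * m) h
    simp only [add_mul, mul_assoc, hm.eq, two_smul] at this
    rw [← mul_assoc] at this
    exact add_right_cancel (this.trans (add_comm _ _))
  have hma : m * a = a := (smul_right_inj h2).1 (by rw [← h, ← hr, hl, two_smul])
  exact ⟨hma, hr ▸ hl.trans hma⟩

theorem IsIdempotentElem.mul_eq_zero_of_add_eq_zero (h2 : (2 : F) ≠ 0) {a b : R}
    (ha : IsIdempotentElem a) (h : a * b + b * a = 0) :
    a * b = 0 ∧ b * a = 0 := by
  have hl : a * b + a * b * a = 0 := by
    simpa only [mul_add, ← mul_assoc, ha.eq, mul_zero] using congrArg (a * ·) h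
  have hr : a * b * a + b * a = 0 := by
    simpa only [add_mul, mul_assoc, ha.eq, zero_mul] using congrArg (· * a) h
  have hab : a * b = b * a := add_right_cancel ((hl.trans hr.symm).trans (add_comm _ _))
  have hab0 : a * b = 0 := (smul_right_inj h2).1 <| by
    rw [two_smul, smul_zero]
    nth_rw 2 [hab]
    exact h
  exact ⟨hab0, hab ▸ hab0⟩

theorem IsIdempotentElem.one_add_mul_one_sub_inv_two_smul (h2 : (2 : F) ≠ 0) {e : R}
    (he : IsIdempotentElem e) :
    (1 + e) * (1 - (2 : F)⁻¹ • e) = 1 ∧ (1 - (2 : F)⁻¹ • e) * (1 + e) = 1 := by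
  have half : (2 : F)⁻¹ • e + (2 : F)⁻¹ • e = e := by
    rw [← add_smul, ← two_mul, mul_inv_cancel₀ h2, one_smul]
  constructor
  · rw [add_mul, one_mul, mul_sub, mul_one, mul_smul_comm, he.eq, sub_add_sub_comm, half,
      add_sub_cancel_right]
  · rw [sub_mul, one_mul, mul_add, mul_one, smul_mul_assoc, he.eq, half, add_sub_cancel_right]

theorem mul_eq_zero_and_mul_eq_zero_of_add_eq_add {e f s w : R} (he : IsIdempotentElem e)
    (hf : IsIdempotentElem f) (hef : e * f = 0) (hfe : f * e = 0) (hse : s * e = 0)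
    (hes : e * s = 0) (hsf : s * f = 0) (hfs : f * s = 0) (hgw : (e + f + s) * w = w)
    (hwg : w * (e + f + s) = w) (hsws : s * w * s = 0) (hw : e * w + w * e = f * w + w * f) :
    s * w = 0 ∧ w * s = 0 := by
  have assoc0 : ∀ {a b : R}, a * b = 0 → ∀ x, a * (b * x) = 0 := fun h x => by
    rw [← mul_assoc, h, zero_mul]
  have assoc1 : ∀ {a : R}, IsIdempotentElem a → ∀ x, a * (a * x) = a * x := fun h x => by
    rw [← mul_assoc, h.eq]
  have hswe : s * (w * e) = 0 := by
    simpa [mul_add, add_mul, mul_assoc, he.eq, hfe, assoc0 hse, assoc0 hsf] using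
      congrArg (fun z => s * z * e) hw
  have hswf : s * (w * f) = 0 := by
    simpa [mul_add, add_mul, mul_assoc, hf.eq, hef, assoc0 hse, assoc0 hsf] using
      (congrArg (fun z => s * z * f) hw).symm
  have hews : e * (w * s) = 0 := by
    simpa [mul_add, add_mul, mul_assoc, assoc1 he, hes, hfs, assoc0 hef] using
      congrArg (fun z => e * z * s) hw
  have hfws : f * (w * s) = 0 := by
    simpa [mul_add, add_mul, mul_assoc, assoc1 hf, hes, hfs, assoc0 hfe] using
      (congrArg (fun z => f * z * s) hw).symm
  rw [mul_assoc] at hsws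
  constructor
  · rw [← hwg]
    simp [mul_add, hswe, hswf, hsws]
  · rw [← hgw]
    simp [add_mul, mul_assoc, hews, hfws, hsws]

namespace IsJordanMultiplicative

variable {φ : A → R}

theorem comp {A' G : Type*} [Ring A'] [Algebra F A'] [FunLike G A' A]
    [NonUnitalAlgHomClass G F A' A] (hφ : IsJordanMultiplicative F φ) (f : G) :
    IsJordanMultiplicative F (φ ∘ f) := by
  intro x y
  simp only [Function.comp_apply, map_smul, map_add, map_mul]
  exact hφ _ _

theorem two_smul_map (h2 : (2 : F) ≠ 0) (hφ : IsJordanMultiplicative F φ) {a b c : A}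
    (h : a * b + b * a = (2 : F) • c) : φ a * φ b + φ b * φ a = (2 : F) • φ c := by
  have := hφ a b
  rw [h, inv_smul_smul₀ h2] at this
  rw [this, smul_inv_smul₀ h2]

theorem isIdempotentElem_map (h2 : (2 : F) ≠ 0) (hφ : IsJordanMultiplicative F φ) {p : A}
    (hp : IsIdempotentElem p) : IsIdempotentElem (φ p) := by
  have := hφ.two_smul_map h2 (a := p) (b := p) (c := p) (by rw [hp.eq, two_smul])
  exact (smul_right_inj h2).1 (by rw [← this, two_smul])

theorem map_mul_eq_and_mul_eq (h2 : (2 : F) ≠ 0) (hφ : IsJordanMultiplicative F φ) {p x : A}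
    (hp : IsIdempotentElem p) (h : p * x + x * p = (2 : F) • x) :
    φ p * φ x = φ x ∧ φ x * φ p = φ x :=
  (hφ.isIdempotentElem_map h2 hp).mul_eq_and_mul_eq_of_add_eq_two_smul h2 (hφ.two_smul_map h2 h)

theorem map_mul_eq_zero (h2 : (2 : F) ≠ 0) (hφ : IsJordanMultiplicative F φ) (h0 : φ 0 = 0)
    {p q : A} (hp : IsIdempotentElem p) (hpq : p * q = 0) (hqp : q * p = 0) :
    φ p * φ q = 0 ∧ φ q * φ p = 0 :=
  (hφ.isIdempotentElem_map h2 hp).mul_eq_zero_of_add_eq_zero h2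
    (by rw [hφ.two_smul_map h2 (c := 0) (by rw [hpq, hqp, add_zero, smul_zero]), h0, smul_zero])

theorem mul_map_eq_zero_of_mixed (h2 : (2 : F) ≠ 0) (hφ : IsJordanMultiplicative F φ)
    (h0 : φ 0 = 0) {p q w : A} {s : R} (hp : IsIdempotentElem p) (hq : IsIdempotentElem q)
    (hpq : p * q = 0) (hqp : q * p = 0) (hpw : p * w + w * p = w) (hqw : q * w + w * q = w)
    (hse : s * φ p = 0) (hes : φ p * s = 0) (hsf : s * φ q = 0) (hfs : φ q * s = 0)
    (hg : φ (p + q) = φ p + φ q + s) :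
    s * φ w = 0 ∧ φ w * s = 0 := by
  obtain ⟨hgw, hwg⟩ := hφ.map_mul_eq_and_mul_eq h2 (x := w) (hp.add hq (by rw [hpq, hqp, add_zero]))
    (by rw [show (p + q) * w + w * (p + q) = (p * w + w * p) + (q * w + w * q) by noncomm_ring,
      hpw, hqw, two_smul])
  obtain ⟨hef, hfe⟩ := hφ.map_mul_eq_zero h2 h0 hp hpq hqp
  have hw : φ p * φ w + φ w * φ p = φ q * φ w + φ w * φ q := by
    rw [hφ.two_smul_map h2 (c := (2 : F)⁻¹ • w) (by rw [smul_inv_smul₀ h2, hpw]),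
      hφ.two_smul_map h2 (c := (2 : F)⁻¹ • w) (by rw [smul_inv_smul₀ h2, hqw])]
  -- `φ w = φ p ∘ φ (2 • w)` lies in `φ p R + R φ p`, which `s` kills from both sides.
  have hsws : s * φ w * s = 0 := by
    have hw2 : φ p * φ ((2 : F) • w) + φ ((2 : F) • w) * φ p = (2 : F) • φ w :=
      hφ.two_smul_map h2 (by rw [mul_smul_comm, smul_mul_assoc, ← smul_add, hpw])
    apply (smul_right_inj h2).1
    rw [smul_zero, ← smul_mul_assoc, ← mul_smul_comm, ← hw2, mul_add, add_mul, ← mul_assoc s,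
      hse, mul_assoc s, mul_assoc _ (φ p) s, hes]
    simp
  exact mul_eq_zero_and_mul_eq_zero_of_add_eq_add (hφ.isIdempotentElem_map h2 hp)
    (hφ.isIdempotentElem_map h2 hq) hef hfe hse hes hsf hfs (hg ▸ hgw) (hg ▸ hwg) hsws hw

theorem map_add_of_two_smul_eq (h2 : (2 : F) ≠ 0) (hφ : IsJordanMultiplicative F φ)
    (h0 : φ 0 = 0) {p q u v X Y : A} (hp : IsIdempotentElem p) (hq : IsIdempotentElem q)
    (hpq : p * q = 0) (hqp : q * p = 0) (hpu : p * u + u * p = u) (hqu : q * u + u * q = u)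
    (hpv : p * v + v * p = v) (hqv : q * v + v * q = v) (hX : u * v + v * u = (2 : F) • X)
    (hXY : X * Y + Y * X = (2 : F) • (p + q)) :
    φ (p + q) = φ p + φ q := by
  set e := φ p
  set f := φ q
  set g := φ (p + q)
  have hpq' : IsIdempotentElem (p + q) := hp.add hq (by rw [hpq, hqp, add_zero])
  have he : IsIdempotentElem e := hφ.isIdempotentElem_map h2 hp
  have hf : IsIdempotentElem f := hφ.isIdempotentElem_map h2 hq
  have hg : IsIdempotentElem g := hφ.isIdempotentElem_map h2 hpq'
  obtain ⟨hef, hfe⟩ : e * f = 0 ∧ f * e = 0 := hφ.map_mul_eq_zero h2 h0 hp hpq hqp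
  obtain ⟨hge, heg⟩ : g * e = e ∧ e * g = e := hφ.map_mul_eq_and_mul_eq h2 hpq'
    (by rw [add_mul, mul_add, hp.eq, hpq, hqp, two_smul]; abel)
  obtain ⟨hgf, hfg⟩ : g * f = f ∧ f * g = f := hφ.map_mul_eq_and_mul_eq h2 hpq'
    (by rw [add_mul, mul_add, hq.eq, hpq, hqp, two_smul]; abel)
  set s := g - e - f with hs
  have hse : s * e = 0 := by simp [s, sub_mul, hge, he.eq, hfe]
  have hes : e * s = 0 := by simp [s, mul_sub, heg, he.eq, hef]
  have hsf : s * f = 0 := by simp [s, sub_mul, hgf, hf.eq, hef]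
  have hfs : f * s = 0 := by simp [s, mul_sub, hfg, hf.eq, hfe]
  have hsg : s * g = s := by simp [s, sub_mul, hg.eq, heg, hfg]
  have hegs : g = e + f + s := by rw [hs]; abel
  obtain ⟨hsu, hus⟩ :=
    hφ.mul_map_eq_zero_of_mixed h2 h0 hp hq hpq hqp hpu hqu hse hes hsf hfs hegs
  obtain ⟨hsv, hvs⟩ :=
    hφ.mul_map_eq_zero_of_mixed h2 h0 hp hq hpq hqp hpv hqv hse hes hsf hfs hegs
  have hsX : s * φ X = 0 := (smul_right_inj h2).1 <| by
    rw [← mul_smul_comm, ← hφ.two_smul_map h2 hX, mul_add, ← mul_assoc, ← mul_assoc, hsu, hsv]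
    simp
  have hXs : φ X * s = 0 := (smul_right_inj h2).1 <| by
    rw [← smul_mul_assoc, ← hφ.two_smul_map h2 hX, add_mul, mul_assoc, mul_assoc, hus, hvs]
    simp
  have hs0 : s = 0 := (smul_right_inj h2).1 <| calc
    (2 : F) • s = (2 : F) • (s * g * s) := by
      rw [hsg, show s * s = s * (g - e - f) from rfl, mul_sub, mul_sub, hsg, hse, hsf]
      simp
    _ = s * (φ X * φ Y + φ Y * φ X) * s := by
      rw [hφ.two_smul_map h2 hXY, mul_smul_comm, smul_mul_assoc]
    _ = (2 : F) • 0 := by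
      simp [mul_add, ← mul_assoc, hsX, mul_assoc _ (φ X) s, hXs]
  rwa [hs, sub_sub, sub_eq_zero] at hs0

end IsJordanMultiplicative

end Jordan

namespace Matrix

variable {K m k : Type*} [CommSemiring K] [Fintype m] [Fintype k] [DecidableEq k]

def cornerEmbedding (A : Matrix m k K) (B : Matrix k m K) (hBA : B * A = 1) :
    Matrix k k K →ₙₐ[K] Matrix m m K where
  toFun Z := A * Z * B
  map_smul' c Z := by simp
  map_zero' := by simp
  map_add' Z W := by simp [Matrix.mul_add, Matrix.add_mul]
  map_mul' Z W := by
    simp only [Matrix.mul_assoc]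
    rw [← Matrix.mul_assoc B A, hBA, Matrix.one_mul]

@[simp]
theorem cornerEmbedding_apply (A : Matrix m k K) (B : Matrix k m K) (hBA : B * A = 1)
    (Z : Matrix k k K) : cornerEmbedding A B hBA Z = A * Z * B :=
  rfl

end Matrix

theorem Matrix.map_one_eq_sum_single_of_subsingleton {K M μ : Type*} [Semiring K]
    [AddCommMonoid M] [Fintype μ] [DecidableEq μ] [Subsingleton μ] {ψ : Matrix μ μ K → M}
    (h0 : ψ 0 = 0) :
    ψ 1 = ∑ i, ψ (single i i 1) := by
  rcases isEmpty_or_nonempty μ with hμ | ⟨⟨i⟩⟩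
  · rw [Subsingleton.elim (1 : Matrix μ μ K) 0, h0, Finset.univ_eq_empty, Finset.sum_empty]
  · rw [Fintype.sum_subsingleton _ i]
    congr
    ext a b
    rw [Subsingleton.elim a i, Subsingleton.elim b i, one_apply_eq, single_apply_same]

section MatrixUnits

open Matrix

variable {F R : Type*} [Field F] [Ring R] [Algebra F R]

namespace IsJordanMultiplicative

theorem map_one_eq_add_of_mul_eq_one (h2 : (2 : F) ≠ 0)
    {β γ : Type*} [Fintype β] [Fintype γ] [DecidableEq β] [DecidableEq γ]
    {ψ : Matrix ((β ⊕ γ) ⊕ β) ((β ⊕ γ) ⊕ β) F → R} (hψ : IsJordanMultiplicative F ψ)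
    (h0 : ψ 0 = 0) {E : Matrix β γ F} {E' : Matrix γ β F} (hE : E' * E = 1) :
    ψ 1 = ψ (fromBlocks 1 0 0 0) + ψ (fromBlocks 0 0 0 1) := by
  have hEE : IsIdempotentElem (E * E') := by
    rw [IsIdempotentElem, Matrix.mul_assoc, ← Matrix.mul_assoc E', hE, Matrix.one_mul]
  obtain ⟨hl, hr⟩ := hEE.one_add_mul_one_sub_inv_two_smul h2
  have h1 : (1 : Matrix ((β ⊕ γ) ⊕ β) ((β ⊕ γ) ⊕ β) F) =
      fromBlocks 1 0 0 0 + fromBlocks 0 0 0 1 := by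
    simp [fromBlocks_add]
  rw [h1]
  -- `u ∘ v = X = 1 ⊕ (1 + E E')`, and `Y` inverts `X` because `E E'` is idempotent.
  refine hψ.map_add_of_two_smul_eq h2 h0 (u := fromBlocks 0 (fromRows 1 0) (fromCols 0 E) 0)
    (v := (2 : F) • fromBlocks 0 (fromRows 0 E') (fromCols 1 0) 0)
    (X := fromBlocks 1 0 0 (1 + E * E')) (Y := fromBlocks 1 0 0 (1 - (2 : F)⁻¹ • (E * E')))
    ?_ ?_ ?_ ?_ ?_ ?_ ?_ ?_ ?_ ?_
  rotate_right 2
  · simp only [Matrix.mul_smul, Matrix.smul_mul, ← smul_add, fromBlocks_multiply,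
      fromRows_mul_fromCols, fromCols_mul_fromRows, hE]
    simp [fromBlocks_add, add_comm]
  · simp [fromBlocks_multiply, fromBlocks_add, hl, hr, two_smul]
  all_goals simp [IsIdempotentElem, fromBlocks_multiply, fromBlocks_add, fromBlocks_smul]

theorem map_mul_eq_sum_single {μ ν : Type*} [Fintype μ] [Fintype ν] [DecidableEq μ]
    [DecidableEq ν] {ψ : Matrix μ μ F → R} (hψ : IsJordanMultiplicative F ψ) (h0 : ψ 0 = 0)
    {A : Matrix μ ν F} {B : Matrix ν μ F} (hBA : B * A = 1)
    (hν : ∀ χ : Matrix ν ν F → R, IsJordanMultiplicative F χ → χ 0 = 0 →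
      χ 1 = ∑ j, χ (single j j 1)) :
    ψ (A * B) = ∑ j, ψ (A * (single j j 1 : Matrix ν ν F) * B) := by
  have := hν (ψ ∘ cornerEmbedding A B hBA) (hψ.comp _) (by simp [h0])
  simpa using this

theorem map_fromBlocks_one_zero_zero_zero {α β : Type*} [Fintype α]
    [Fintype β] [DecidableEq α] [DecidableEq β] {ψ : Matrix (α ⊕ β) (α ⊕ β) F → R}
    (hψ : IsJordanMultiplicative F ψ) (h0 : ψ 0 = 0)
    (hα : ∀ χ : Matrix α α F → R, IsJordanMultiplicative F χ → χ 0 = 0 →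
      χ 1 = ∑ a, χ (single a a 1)) :
    ψ (fromBlocks 1 0 0 0) = ∑ a, ψ (single (Sum.inl a) (Sum.inl a) 1) := by
  convert hψ.map_mul_eq_sum_single h0 (A := fromRows (1 : Matrix α α F) (0 : Matrix β α F))
    (B := fromCols 1 0) (by simp [fromCols_mul_fromRows]) hα using 2 with a
  · rw [fromRows_mul_fromCols]
    simp
  · rw [fromRows_mul, fromRows_mul_fromCols]
    congr 1
    ext (i | i) (j | j) <;> simp [single_apply]

theorem map_fromBlocks_zero_zero_zero_one {α β : Type*} [Fintype α]
    [Fintype β] [DecidableEq α] [DecidableEq β] {ψ : Matrix (α ⊕ β) (α ⊕ β) F → R}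
    (hψ : IsJordanMultiplicative F ψ) (h0 : ψ 0 = 0)
    (hβ : ∀ χ : Matrix β β F → R, IsJordanMultiplicative F χ → χ 0 = 0 →
      χ 1 = ∑ b, χ (single b b 1)) :
    ψ (fromBlocks 0 0 0 1) = ∑ b, ψ (single (Sum.inr b) (Sum.inr b) 1) := by
  convert hψ.map_mul_eq_sum_single h0 (A := fromRows (0 : Matrix α β F) (1 : Matrix β β F))
    (B := fromCols 0 1) (by simp [fromCols_mul_fromRows]) hβ using 2 with b
  · rw [fromRows_mul_fromCols]
    simp
  · rw [fromRows_mul, fromRows_mul_fromCols]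
    congr 1
    ext (i | i) (j | j) <;> simp [single_apply]

theorem map_one_eq_sum_single (h2 : (2 : F) ≠ 0) {μ : Type}
    [Fintype μ] [DecidableEq μ] {ψ : Matrix μ μ F → R} (hψ : IsJordanMultiplicative F ψ)
    (h0 : ψ 0 = 0) : ψ 1 = ∑ i, ψ (single i i 1) := by
  induction hm : Fintype.card μ using Nat.strong_induction_on generalizing μ with
  | _ m ih =>
  obtain hm1 | hm2 := Nat.lt_or_ge m 2
  · have : Subsingleton μ := Fintype.card_le_one_iff_subsingleton.mp (by omega)
    exact Matrix.map_one_eq_sum_single_of_subsingleton h0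
  set b := m / 2
  have hc : m % 2 ≤ b := by omega
  let e : μ ≃ (Fin b ⊕ Fin (m % 2)) ⊕ Fin b := Fintype.equivOfCardEq (by simp; omega)
  have hψ' := hψ.comp (reindexAlgEquiv F F e.symm)
  have hsplit := hψ'.map_one_eq_add_of_mul_eq_one h2 (by simp [h0])
    (E := (1 : Matrix (Fin b) (Fin b) F).submatrix id (Fin.castLE hc))
    (E' := (1 : Matrix (Fin b) (Fin b) F).submatrix (Fin.castLE hc) id) (by
      rw [← submatrix_mul _ _ _ _ _ Function.bijective_id, Matrix.one_mul,
        submatrix_one _ (Fin.castLE_injective hc)])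
  have hl := hψ'.map_fromBlocks_one_zero_zero_zero (by simp [h0])
    (fun χ hχ hχ0 => ih _ (by simp; omega) hχ hχ0 rfl)
  have hr := hψ'.map_fromBlocks_zero_zero_zero_one (by simp [h0])
    (fun χ hχ hχ0 => ih _ (by simp; omega) hχ hχ0 rfl)
  calc ψ 1 = (ψ ∘ reindexAlgEquiv F F e.symm) 1 := by simp
    _ = ∑ x, (ψ ∘ reindexAlgEquiv F F e.symm) (single x x 1) := by
      rw [hsplit, hl, hr]
      exact (Fintype.sum_sum_type (fun x => (ψ ∘ reindexAlgEquiv F F e.symm) (single x x 1))).symm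
    _ = ∑ i, ψ (single i i 1) := by
      simpa using e.symm.sum_comp (fun i => ψ (single i i (1 : F)))

end IsJordanMultiplicative

variable {m : Type*} [Fintype m] [DecidableEq m]

theorem IsIdempotentElem.exists_mul_eq_and_mul_eq_one {p : Matrix m m F}
    (hp : IsIdempotentElem p) :
    ∃ (k : ℕ) (A : Matrix m (Fin k) F) (B : Matrix (Fin k) m F), A * B = p ∧ B * A = 1 := by
  let f := toLin' p
  let b := Module.finBasis F (LinearMap.range f)
  refine ⟨_, LinearMap.toMatrix b (Pi.basisFun F m) (LinearMap.range f).subtype,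
    LinearMap.toMatrix (Pi.basisFun F m) b f.rangeRestrict, ?_, ?_⟩
  · rw [← LinearMap.toMatrix_comp, LinearMap.subtype_comp_codRestrict,
      LinearMap.toMatrix_eq_toMatrix', LinearMap.toMatrix'_toLin']
  · rw [← LinearMap.toMatrix_comp, ← LinearMap.toMatrix_id b]
    congr 1
    ext ⟨_, x, rfl⟩
    simp [f, Matrix.mulVec_mulVec, hp.eq]

theorem IsJordanMultiplicative.map_add_of_orthogonal (h2 : (2 : F) ≠ 0)
    {φ : Matrix m m F → R} (hφ : IsJordanMultiplicative F φ) (h0 : φ 0 = 0) {p q : Matrix m m F}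
    (hp : IsIdempotentElem p) (hq : IsIdempotentElem q) (hpq : p * q = 0) (hqp : q * p = 0) :
    φ (p + q) = φ p + φ q := by
  obtain ⟨r, A, B, rfl, hBA⟩ := hp.exists_mul_eq_and_mul_eq_one
  obtain ⟨t, C, D, rfl, hDC⟩ := hq.exists_mul_eq_and_mul_eq_one
  have hBC : B * C = 0 := calc
    B * C = B * A * B * (C * D * C) := by
      rw [hBA, Matrix.mul_assoc C, hDC, Matrix.one_mul, Matrix.mul_one]
    _ = B * (A * B * (C * D)) * C := by simp only [Matrix.mul_assoc]
    _ = 0 := by rw [hpq, Matrix.mul_zero, Matrix.zero_mul]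
  have hDA : D * A = 0 := calc
    D * A = D * C * D * (A * B * A) := by
      rw [hDC, Matrix.mul_assoc A, hBA, Matrix.one_mul, Matrix.mul_one]
    _ = D * (C * D * (A * B)) * A := by simp only [Matrix.mul_assoc]
    _ = 0 := by rw [hqp, Matrix.mul_zero, Matrix.zero_mul]
  have hframe : fromRows B D * fromCols A C = 1 := by
    rw [fromRows_mul_fromCols, hBA, hBC, hDA, hDC, fromBlocks_one]
  have hψ := hφ.comp (cornerEmbedding _ _ hframe)
  have hψ0 : (φ ∘ cornerEmbedding _ _ hframe) 0 = 0 := by simp [h0]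
  have := hψ.map_one_eq_sum_single h2 hψ0
  rw [Fintype.sum_sum_type,
    ← hψ.map_fromBlocks_one_zero_zero_zero hψ0 (fun χ hχ hχ0 => hχ.map_one_eq_sum_single h2 hχ0),
    ← hψ.map_fromBlocks_zero_zero_zero_one hψ0 (fun χ hχ hχ0 => hχ.map_one_eq_sum_single h2 hχ0)]
    at this
  simpa [fromCols_mul_fromBlocks, fromCols_mul_fromRows] using this

end MatrixUnits

theorem stmt_14_general {F : Type*} [Field F] (h2 : (2 : F) ≠ 0) (n : ℕ)
    (φ : Matrix (Fin n) (Fin n) F → Matrix (Fin n) (Fin n) F)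
    (hφ : ∀ X Y : Matrix (Fin n) (Fin n) F,
      φ ((2 : F)⁻¹ • (X * Y + Y * X)) = (2 : F)⁻¹ • (φ X * φ Y + φ Y * φ X))
    (h0 : φ 0 = 0)
    (P Q : Matrix (Fin n) (Fin n) F) (hP : P * P = P) (hQ : Q * Q = Q)
    (hPQ : P * Q = 0) (hQP : Q * P = 0) :
    φ (P + Q) = φ P + φ Q :=
  IsJordanMultiplicative.map_add_of_orthogonal h2 hφ h0 hP hQ hPQ hQP

theorem stmt_14 {F : Type*} [Field F] (h2 : (2 : F) ≠ 0) (n : ℕ)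
    (φ : Matrix (Fin n) (Fin n) F → Matrix (Fin n) (Fin n) F)
    (hφ : ∀ X Y : Matrix (Fin n) (Fin n) F,
      φ ((2 : F)⁻¹ • (X * Y + Y * X)) = (2 : F)⁻¹ • (φ X * φ Y + φ Y * φ X))
    (hnz : φ ≠ 0) (h0 : φ 0 = 0)
    (P Q : Matrix (Fin n) (Fin n) F) (hP : P * P = P) (hQ : Q * Q = Q)
    (hPQ : P * Q = 0) (hQP : Q * P = 0) :
    φ (P + Q) = φ P + φ Q :=
  stmt_14_general h2 n φ hφ h0 P Q hP hQ hPQ hQP
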